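/- arXiv:2603.05533 — 2 statements merged into one kernel-verified Lean document; each statement's English description precedes it below -/
import Mathlib

section
/- Let g : ℝ² → ℝ be smooth. Then g satisfies ∂⁴g/∂x₁²∂x₂² = 0, ∂⁴g/∂x₁³∂x₂ = 0, ∂⁴g/∂x₁∂x₂³ = 0, and ∂⁴g/∂x₁⁴ + ∂⁴g/∂x₂⁴ = 0 identically on ℝ² if and only if there exist smooth functions f₁, f₂, f₃, f₄ : ℝ → ℝ and a constant c ∈ ℝ such that g(x₁,x₂) = f₁(x₁) + x₂ f₂(x₁) + f₃(x₂) + x₁ f₄(x₂) for all (x₁,x₂) ∈ ℝ², where f₂''' ≡ 0, f₄''' ≡ 0, f₁'''' ≡ −c and f₃'''' ≡ c. (This is the form of the in-plane function g in the universal displacements of the tetragonal strain-gradient class ℤ₄ ⊕ ℤ₂ᶜ.) -/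
/-- Partial derivative of a scalar field on `ℝ²` in the `j`-th coordinate direction. -/
noncomputable def pd2 (j : Fin 2) (f : (Fin 2 → ℝ) → ℝ) : (Fin 2 → ℝ) → ℝ :=
  fun x => fderiv ℝ f x (Pi.single j 1)

lemma pd2_contDiff {F : (Fin 2 → ℝ) → ℝ} (hF : ContDiff ℝ (⊤:ℕ∞) F) (j : Fin 2) :
    ContDiff ℝ (⊤:ℕ∞) (pd2 j F) := by
  have h1 : ContDiff ℝ (⊤:ℕ∞) (fderiv ℝ F) := hF.fderiv_right (by simp)
  exact (ContinuousLinearMap.apply ℝ ℝ (Pi.single j 1)).contDiff.comp h1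

lemma pd2_sndFDeriv {F : (Fin 2 → ℝ) → ℝ} (hF : ContDiff ℝ (⊤:ℕ∞) F) (i j : Fin 2)
    (x : Fin 2 → ℝ) :
    pd2 i (pd2 j F) x = fderiv ℝ (fderiv ℝ F) x (Pi.single i 1) (Pi.single j 1) := by
  have h1 : ContDiff ℝ (⊤:ℕ∞) (fderiv ℝ F) := hF.fderiv_right (by simp)
  have h2 : DifferentiableAt ℝ (fderiv ℝ F) x := (h1.differentiable (by simp)) x
  have h3 : pd2 j F = fun y => (fderiv ℝ F y) (Pi.single j 1) := rfl
  have := fderiv_clm_apply (𝕜 := ℝ) (c := fderiv ℝ F) (u := fun _ => Pi.single j 1)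
    h2 (differentiableAt_const _)
  rw [pd2, h3]
  simp only [this]
  simp

lemma pd2_comm {F : (Fin 2 → ℝ) → ℝ} (hF : ContDiff ℝ (⊤:ℕ∞) F) (i j : Fin 2) :
    pd2 i (pd2 j F) = pd2 j (pd2 i F) := by
  funext x
  rw [pd2_sndFDeriv hF, pd2_sndFDeriv hF]
  exact (hF.contDiffAt.isSymmSndFDerivAt (by simpa using WithTop.coe_le_coe.2 (le_top : (2:ℕ∞) ≤ ⊤))) _ _

lemma single_vec0 : (Pi.single (0:Fin 2) (1:ℝ)) = ![1,0] := by
  funext i; fin_cases i <;> simp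

lemma single_vec1 : (Pi.single (1:Fin 2) (1:ℝ)) = ![0,1] := by
  funext i; fin_cases i <;> simp [Pi.single_apply]

lemma fderiv_apply_eq {F : (Fin 2 → ℝ) → ℝ} (hF : Differentiable ℝ F) (x v : Fin 2 → ℝ) :
    fderiv ℝ F x v = v 0 * pd2 0 F x + v 1 * pd2 1 F x := by
  have hv : v = v 0 • (Pi.single 0 1 : Fin 2 → ℝ) + v 1 • (Pi.single 1 1 : Fin 2 → ℝ) := by
    funext i; fin_cases i <;> simp [Pi.single_apply]
  conv_lhs => rw [hv]
  rw [map_add, map_smul, map_smul]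
  simp [pd2, smul_eq_mul]

lemma hasDerivAt_line0 {F : (Fin 2 → ℝ) → ℝ} (hF : Differentiable ℝ F) (y s : ℝ) :
    HasDerivAt (fun t => F ![t, y]) (pd2 0 F ![s, y]) s := by
  have hγ : HasDerivAt (fun t => (![t, y] : Fin 2 → ℝ)) ![1, 0] s := by
    rw [hasDerivAt_pi]
    intro i; fin_cases i <;> simp <;>
      [exact hasDerivAt_id s; exact hasDerivAt_const s y]
  have := (hF.differentiableAt.hasFDerivAt).comp_hasDerivAt s hγ
  simpa [pd2, single_vec0, Function.comp_def] using this

lemma hasDerivAt_line1 {F : (Fin 2 → ℝ) → ℝ} (hF : Differentiable ℝ F) (x s : ℝ) :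
    HasDerivAt (fun t => F ![x, t]) (pd2 1 F ![x, s]) s := by
  have hγ : HasDerivAt (fun t => (![x, t] : Fin 2 → ℝ)) ![0, 1] s := by
    rw [hasDerivAt_pi]
    intro i; fin_cases i <;> simp <;>
      [exact hasDerivAt_const s x; exact hasDerivAt_id s]
  have := (hF.differentiableAt.hasFDerivAt).comp_hasDerivAt s hγ
  simpa [pd2, single_vec1, Function.comp_def] using this

lemma deriv_line0 {F : (Fin 2 → ℝ) → ℝ} (hF : Differentiable ℝ F) (y s : ℝ) :
    deriv (fun t => F ![t, y]) s = pd2 0 F ![s, y] := (hasDerivAt_line0 hF y s).deriv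

lemma deriv_line1 {F : (Fin 2 → ℝ) → ℝ} (hF : Differentiable ℝ F) (x s : ℝ) :
    deriv (fun t => F ![x, t]) s = pd2 1 F ![x, s] := (hasDerivAt_line1 hF x s).deriv

lemma vec_eta (p : Fin 2 → ℝ) : (![p 0, p 1] : Fin 2 → ℝ) = p := by
  funext i; fin_cases i <;> simp

lemma affine_of_hasDerivAt {h h' : ℝ → ℝ} (hd : ∀ t, HasDerivAt h (h' t) t)
    (hd2 : ∀ t, HasDerivAt h' 0 t) (t : ℝ) : h t = h 0 + t * h' 0 := by
  have hc : ∀ s, h' s = h' 0 := fun s =>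
    is_const_of_deriv_eq_zero (fun u => (hd2 u).differentiableAt) (fun u => (hd2 u).deriv) s 0
  have key : ∀ s, HasDerivAt (fun u => h u - u * h' 0) 0 s := by
    intro s
    have := (hd s).sub ((hasDerivAt_id s).mul_const (h' 0))
    rw [hc s, one_mul, sub_self] at this
    exact this
  have := is_const_of_deriv_eq_zero (fun u => (key u).differentiableAt)
    (fun u => (key u).deriv) t 0
  simp only [zero_mul] at this
  linarith

-- shape framework
noncomputable def shape (a b c d : ℝ → ℝ) : (Fin 2 → ℝ) → ℝ :=
  fun p => a (p 0) + p 1 * b (p 0) + c (p 1) + p 0 * d (p 1)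

lemma shape_contDiff {a b c d : ℝ → ℝ} (ha : ContDiff ℝ (⊤:ℕ∞) a) (hb : ContDiff ℝ (⊤:ℕ∞) b)
    (hc : ContDiff ℝ (⊤:ℕ∞) c) (hd : ContDiff ℝ (⊤:ℕ∞) d) :
    ContDiff ℝ (⊤:ℕ∞) (shape a b c d) := by
  have h0 : ContDiff ℝ (⊤:ℕ∞) (fun p : Fin 2 → ℝ => p 0) :=
    (ContinuousLinearMap.proj 0 : (Fin 2 → ℝ) →L[ℝ] ℝ).contDiff
  have h1 : ContDiff ℝ (⊤:ℕ∞) (fun p : Fin 2 → ℝ => p 1) :=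
    (ContinuousLinearMap.proj 1 : (Fin 2 → ℝ) →L[ℝ] ℝ).contDiff
  exact (((ha.comp h0).add (h1.mul (hb.comp h0))).add (hc.comp h1)).add (h0.mul (hd.comp h1))

lemma smooth_deriv {a : ℝ → ℝ} (ha : ContDiff ℝ (⊤:ℕ∞) a) : ContDiff ℝ (⊤:ℕ∞) (deriv a) :=
  (contDiff_infty_iff_deriv.mp ha).2

lemma shape_pd0 {a b c d : ℝ → ℝ} (ha : ContDiff ℝ (⊤:ℕ∞) a) (hb : ContDiff ℝ (⊤:ℕ∞) b)
    (hc : ContDiff ℝ (⊤:ℕ∞) c) (hd : ContDiff ℝ (⊤:ℕ∞) d) :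
    pd2 0 (shape a b c d) = shape (deriv a) (deriv b) d (fun _ => 0) := by
  funext p
  have hdiff : Differentiable ℝ (shape a b c d) :=
    (shape_contDiff ha hb hc hd).differentiable (by simp)
  rw [← vec_eta p, ← deriv_line0 hdiff (p 1) (p 0)]
  have hline : (fun t => shape a b c d ![t, p 1]) =
      fun t => a t + p 1 * b t + c (p 1) + t * d (p 1) := by
    funext t; simp [shape]
  rw [hline]
  have H : HasDerivAt (fun t => a t + p 1 * b t + c (p 1) + t * d (p 1))
      (deriv a (p 0) + p 1 * deriv b (p 0) + 0 + 1 * d (p 1)) (p 0) := by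
    exact ((((ha.differentiable (by simp) (p 0)).hasDerivAt.add
      (((hb.differentiable (by simp) (p 0)).hasDerivAt).const_mul (p 1))).add
      (hasDerivAt_const _ _)).add ((hasDerivAt_id (p 0)).mul_const (d (p 1))))
  rw [H.deriv]
  simp [shape]

lemma shape_pd1 {a b c d : ℝ → ℝ} (ha : ContDiff ℝ (⊤:ℕ∞) a) (hb : ContDiff ℝ (⊤:ℕ∞) b)
    (hc : ContDiff ℝ (⊤:ℕ∞) c) (hd : ContDiff ℝ (⊤:ℕ∞) d) :
    pd2 1 (shape a b c d) = shape b (fun _ => 0) (deriv c) (deriv d) := by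
  funext p
  have hdiff : Differentiable ℝ (shape a b c d) :=
    (shape_contDiff ha hb hc hd).differentiable (by simp)
  rw [← vec_eta p, ← deriv_line1 hdiff (p 0) (p 1)]
  have hline : (fun t => shape a b c d ![p 0, t]) =
      fun t => a (p 0) + t * b (p 0) + c t + p 0 * d t := by
    funext t; simp [shape]
  rw [hline]
  have H : HasDerivAt (fun t => a (p 0) + t * b (p 0) + c t + p 0 * d t)
      (0 + 1 * b (p 0) + deriv c (p 1) + p 0 * deriv d (p 1)) (p 1) := by
    exact (((hasDerivAt_const _ _).add ((hasDerivAt_id (p 1)).mul_const (b (p 0)))).add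
      (hc.differentiable (by simp) (p 1)).hasDerivAt).add
      (((hd.differentiable (by simp) (p 1)).hasDerivAt).const_mul (p 0))
  rw [H.deriv]
  simp [shape]

lemma converse_dir {f₁ f₂ f₃ f₄ : ℝ → ℝ} {c : ℝ}
    (h₁ : ContDiff ℝ (⊤:ℕ∞) f₁) (h₂ : ContDiff ℝ (⊤:ℕ∞) f₂)
    (h₃ : ContDiff ℝ (⊤:ℕ∞) f₃) (h₄ : ContDiff ℝ (⊤:ℕ∞) f₄)
    (hf₂ : ∀ t, deriv (deriv (deriv f₂)) t = 0)
    (hf₄ : ∀ t, deriv (deriv (deriv f₄)) t = 0)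
    (hf₁ : ∀ t, deriv (deriv (deriv (deriv f₁))) t = -c)
    (hf₃ : ∀ t, deriv (deriv (deriv (deriv f₃))) t = c) :
    (∀ p, pd2 0 (pd2 0 (pd2 1 (pd2 1 (shape f₁ f₂ f₃ f₄)))) p = 0) ∧
    (∀ p, pd2 0 (pd2 0 (pd2 0 (pd2 1 (shape f₁ f₂ f₃ f₄)))) p = 0) ∧
    (∀ p, pd2 0 (pd2 1 (pd2 1 (pd2 1 (shape f₁ f₂ f₃ f₄)))) p = 0) ∧
    (∀ p, pd2 0 (pd2 0 (pd2 0 (pd2 0 (shape f₁ f₂ f₃ f₄)))) p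
        + pd2 1 (pd2 1 (pd2 1 (pd2 1 (shape f₁ f₂ f₃ f₄)))) p = 0) := by
  have z : ContDiff ℝ (⊤:ℕ∞) (fun _ : ℝ => (0:ℝ)) := contDiff_const
  have d₁ := smooth_deriv h₁; have d₂ := smooth_deriv h₂
  have d₃ := smooth_deriv h₃; have d₄ := smooth_deriv h₄
  have dd₁ := smooth_deriv d₁; have dd₂ := smooth_deriv d₂
  have dd₃ := smooth_deriv d₃; have dd₄ := smooth_deriv d₄
  have ddd₁ := smooth_deriv dd₁; have ddd₂ := smooth_deriv dd₂
  have ddd₃ := smooth_deriv dd₃; have ddd₄ := smooth_deriv dd₄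
  have zder : deriv (fun _ : ℝ => (0:ℝ)) = fun _ => 0 := deriv_const' 0
  -- D1
  have e1 : pd2 1 (shape f₁ f₂ f₃ f₄) = shape f₂ (fun _ => 0) (deriv f₃) (deriv f₄) :=
    shape_pd1 h₁ h₂ h₃ h₄
  -- D1 D1
  have e11 : pd2 1 (pd2 1 (shape f₁ f₂ f₃ f₄))
      = shape (fun _ => 0) (fun _ => 0) (deriv (deriv f₃)) (deriv (deriv f₄)) := by
    rw [e1, shape_pd1 h₂ z d₃ d₄]; try simp only [zder]
  -- D0 D1 D1
  have e011 : pd2 0 (pd2 1 (pd2 1 (shape f₁ f₂ f₃ f₄)))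
      = shape (fun _ => 0) (fun _ => 0) (deriv (deriv f₄)) (fun _ => 0) := by
    rw [e11, shape_pd0 z z dd₃ dd₄]; try simp only [zder]
  -- h1 : D0 D0 D1 D1
  have e0011 : pd2 0 (pd2 0 (pd2 1 (pd2 1 (shape f₁ f₂ f₃ f₄))))
      = shape (fun _ => 0) (fun _ => 0) (fun _ => 0) (fun _ => 0) := by
    rw [e011, shape_pd0 z z dd₄ z]; try simp only [zder]
  -- D0 D1
  have e01 : pd2 0 (pd2 1 (shape f₁ f₂ f₃ f₄))
      = shape (deriv f₂) (fun _ => 0) (deriv f₄) (fun _ => 0) := by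
    rw [e1, shape_pd0 h₂ z d₃ d₄]; try simp only [zder]
  have e001 : pd2 0 (pd2 0 (pd2 1 (shape f₁ f₂ f₃ f₄)))
      = shape (deriv (deriv f₂)) (fun _ => 0) (fun _ => 0) (fun _ => 0) := by
    rw [e01, shape_pd0 d₂ z d₄ z]; try simp only [zder]
  have e0001 : pd2 0 (pd2 0 (pd2 0 (pd2 1 (shape f₁ f₂ f₃ f₄))))
      = shape (deriv (deriv (deriv f₂))) (fun _ => 0) (fun _ => 0) (fun _ => 0) := by
    rw [e001, shape_pd0 dd₂ z z z]; try simp only [zder]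
  -- D1 D1 D1
  have e111 : pd2 1 (pd2 1 (pd2 1 (shape f₁ f₂ f₃ f₄)))
      = shape (fun _ => 0) (fun _ => 0) (deriv (deriv (deriv f₃))) (deriv (deriv (deriv f₄))) := by
    rw [e11, shape_pd1 z z dd₃ dd₄]; try simp only [zder]
  have e0111 : pd2 0 (pd2 1 (pd2 1 (pd2 1 (shape f₁ f₂ f₃ f₄))))
      = shape (fun _ => 0) (fun _ => 0) (deriv (deriv (deriv f₄))) (fun _ => 0) := by
    rw [e111, shape_pd0 z z ddd₃ ddd₄]; try simp only [zder]
  have e1111 : pd2 1 (pd2 1 (pd2 1 (pd2 1 (shape f₁ f₂ f₃ f₄))))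
      = shape (fun _ => 0) (fun _ => 0) (deriv (deriv (deriv (deriv f₃))))
          (deriv (deriv (deriv (deriv f₄)))) := by
    rw [e111, shape_pd1 z z ddd₃ ddd₄]; try simp only [zder]
  -- D0 powers
  have e0 : pd2 0 (shape f₁ f₂ f₃ f₄) = shape (deriv f₁) (deriv f₂) f₄ (fun _ => 0) :=
    shape_pd0 h₁ h₂ h₃ h₄
  have e00 : pd2 0 (pd2 0 (shape f₁ f₂ f₃ f₄))
      = shape (deriv (deriv f₁)) (deriv (deriv f₂)) (fun _ => 0) (fun _ => 0) := by
    rw [e0, shape_pd0 d₁ d₂ h₄ z]; try simp only [zder]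
  have e000 : pd2 0 (pd2 0 (pd2 0 (shape f₁ f₂ f₃ f₄)))
      = shape (deriv (deriv (deriv f₁))) (deriv (deriv (deriv f₂))) (fun _ => 0) (fun _ => 0) := by
    rw [e00, shape_pd0 dd₁ dd₂ z z]; try simp only [zder]
  have e0000 : pd2 0 (pd2 0 (pd2 0 (pd2 0 (shape f₁ f₂ f₃ f₄))))
      = shape (deriv (deriv (deriv (deriv f₁)))) (deriv (deriv (deriv (deriv f₂))))
          (fun _ => 0) (fun _ => 0) := by
    rw [e000, shape_pd0 ddd₁ ddd₂ z z]; try simp only [zder]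
  have h2z : deriv (deriv (deriv (deriv f₂))) = fun _ => 0 := by
    rw [show deriv (deriv (deriv f₂)) = fun _ => (0:ℝ) from funext hf₂]; try simp only [zder]
  have h4z : deriv (deriv (deriv (deriv f₄))) = fun _ => 0 := by
    rw [show deriv (deriv (deriv f₄)) = fun _ => (0:ℝ) from funext hf₄]; try simp only [zder]
  refine ⟨fun p => ?_, fun p => ?_, fun p => ?_, fun p => ?_⟩
  · rw [e0011]; simp [shape]
  · rw [e0001]; simp [shape, hf₂]
  · rw [e0111]; simp [shape, hf₄]
  · rw [e0000, e1111, h2z]; simp [shape, hf₁ (p 0), hf₃ (p 1), h4z]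

lemma pd2_zero_fn (j : Fin 2) (p : Fin 2 → ℝ) : pd2 j (fun _ => (0:ℝ)) p = 0 := by
  simp [pd2]

lemma pd2_add {A B : (Fin 2 → ℝ) → ℝ} (hA : Differentiable ℝ A) (hB : Differentiable ℝ B)
    (j : Fin 2) (p : Fin 2 → ℝ) :
    pd2 j (fun q => A q + B q) p = pd2 j A p + pd2 j B p := by
  simp [pd2, fderiv_fun_add (hA p) (hB p)]

lemma const_of_pd2_zero {F : (Fin 2 → ℝ) → ℝ} (hF : Differentiable ℝ F)
    (h0 : ∀ p, pd2 0 F p = 0) (h1 : ∀ p, pd2 1 F p = 0) (p q : Fin 2 → ℝ) : F p = F q := by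
  apply is_const_of_fderiv_eq_zero hF _ p q
  intro x
  ext v
  rw [fderiv_apply_eq hF, h0, h1]
  simp

lemma deriv_sub_affine {A A' : ℝ → ℝ} (hA : ∀ t, HasDerivAt A (A' t) t) (B C : ℝ) :
    deriv (fun t => A t - B - t * C) = fun t => A' t - C := by
  funext t
  have H : HasDerivAt (fun t => A t - B - t * C) (A' t - 0 - 1 * C) t :=
    ((hA t).sub (hasDerivAt_const t B)).sub ((hasDerivAt_id t).mul_const C)
  rw [H.deriv]; ring

lemma curve0_smooth (y : ℝ) : ContDiff ℝ (⊤:ℕ∞) (fun t : ℝ => (![t, y] : Fin 2 → ℝ)) := by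
  apply contDiff_pi.mpr
  intro i
  fin_cases i
  · simp; exact contDiff_id
  · simpa using contDiff_const

lemma curve1_smooth (x : ℝ) : ContDiff ℝ (⊤:ℕ∞) (fun t : ℝ => (![x, t] : Fin 2 → ℝ)) := by
  apply contDiff_pi.mpr
  intro i
  fin_cases i
  · simpa using contDiff_const
  · simp; exact contDiff_id

lemma forward_dir {g : (Fin 2 → ℝ) → ℝ} (hg : ContDiff ℝ (⊤:ℕ∞) g)
    (H1 : ∀ p, pd2 0 (pd2 0 (pd2 1 (pd2 1 g))) p = 0)
    (H2 : ∀ p, pd2 0 (pd2 0 (pd2 0 (pd2 1 g))) p = 0)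
    (H3 : ∀ p, pd2 0 (pd2 1 (pd2 1 (pd2 1 g))) p = 0)
    (H4 : ∀ p, pd2 0 (pd2 0 (pd2 0 (pd2 0 g))) p + pd2 1 (pd2 1 (pd2 1 (pd2 1 g))) p = 0) :
    ∃ (f₁ f₂ f₃ f₄ : ℝ → ℝ) (c : ℝ),
      ContDiff ℝ (⊤ : ℕ∞) f₁ ∧ ContDiff ℝ (⊤ : ℕ∞) f₂ ∧
      ContDiff ℝ (⊤ : ℕ∞) f₃ ∧ ContDiff ℝ (⊤ : ℕ∞) f₄ ∧
      (∀ t, deriv (deriv (deriv f₂)) t = 0) ∧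
      (∀ t, deriv (deriv (deriv f₄)) t = 0) ∧
      (∀ t, deriv (deriv (deriv (deriv f₁))) t = -c) ∧
      (∀ t, deriv (deriv (deriv (deriv f₃))) t = c) ∧
      ∀ p : Fin 2 → ℝ, g p = f₁ (p 0) + p 1 * f₂ (p 0) + f₃ (p 1) + p 0 * f₄ (p 1) := by
  have s0  := pd2_contDiff hg 0
  have s1  := pd2_contDiff hg 1
  have s00 := pd2_contDiff s0 0
  have s01 := pd2_contDiff s1 0
  have s10 := pd2_contDiff s0 1
  have s11 := pd2_contDiff s1 1
  have s000 := pd2_contDiff s00 0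
  have s001 := pd2_contDiff s01 0
  have s110 := pd2_contDiff s10 1
  have s111 := pd2_contDiff s11 1
  have s0000 := pd2_contDiff s000 0
  have s1111 := pd2_contDiff s111 1
  have dg : Differentiable ℝ g := hg.differentiable (by simp)
  have d0 := s0.differentiable (by simp)
  have d1 := s1.differentiable (by simp)
  have d00 := s00.differentiable (by simp)
  have d01 := s01.differentiable (by simp)
  have d10 := s10.differentiable (by simp)
  have d11 := s11.differentiable (by simp)
  have d001 := s001.differentiable (by simp)
  have d000 := s000.differentiable (by simp)
  have d110 := s110.differentiable (by simp)
  have d111 := s111.differentiable (by simp)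
  have d0000 := s0000.differentiable (by simp)
  have d1111 := s1111.differentiable (by simp)
  have c10 : pd2 1 (pd2 0 g) = pd2 0 (pd2 1 g) := pd2_comm hg 1 0
  have Z1 : pd2 0 (pd2 0 (pd2 1 (pd2 1 g))) = fun _ => 0 := funext H1
  have Z2 : pd2 0 (pd2 0 (pd2 0 (pd2 1 g))) = fun _ => 0 := funext H2
  have Z3 : pd2 0 (pd2 1 (pd2 1 (pd2 1 g))) = fun _ => 0 := funext H3
  have e_a : pd2 1 (pd2 0 (pd2 0 g)) = pd2 0 (pd2 0 (pd2 1 g)) := by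
    rw [pd2_comm s0 1 0, c10]
  have K1fn : pd2 1 (pd2 1 (pd2 0 (pd2 0 g))) = fun _ => 0 := by
    rw [e_a, pd2_comm s01 1 0, pd2_comm s1 1 0, Z1]
  have s100 := pd2_contDiff s00 1
  have d100 := s100.differentiable (by simp)
  have pd0_D14 : ∀ p, pd2 0 (pd2 1 (pd2 1 (pd2 1 (pd2 1 g)))) p = 0 := by
    intro p
    rw [pd2_comm s111 0 1, Z3]
    exact pd2_zero_fn 1 p
  have pd1_D04 : ∀ p, pd2 1 (pd2 0 (pd2 0 (pd2 0 (pd2 0 g)))) p = 0 := by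
    intro p
    rw [pd2_comm s000 1 0, pd2_comm s00 1 0, pd2_comm s0 1 0, c10, Z2]
    exact pd2_zero_fn 0 p
  have SZ : (fun q => pd2 0 (pd2 0 (pd2 0 (pd2 0 g))) q + pd2 1 (pd2 1 (pd2 1 (pd2 1 g))) q)
      = fun _ => 0 := funext H4
  have pdsum : ∀ (j : Fin 2) p, pd2 j (pd2 0 (pd2 0 (pd2 0 (pd2 0 g)))) p
      + pd2 j (pd2 1 (pd2 1 (pd2 1 (pd2 1 g)))) p = 0 := by
    intro j p
    rw [← pd2_add d0000 d1111 j p, SZ]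
    exact pd2_zero_fn j p
  have pd0_D04 : ∀ p, pd2 0 (pd2 0 (pd2 0 (pd2 0 (pd2 0 g)))) p = 0 := by
    intro p; have h₁ := pdsum 0 p; have h₂ := pd0_D14 p; linarith
  have pd1_D14 : ∀ p, pd2 1 (pd2 1 (pd2 1 (pd2 1 (pd2 1 g)))) p = 0 := by
    intro p; have h₁ := pdsum 1 p; have h₂ := pd1_D04 p; linarith
  have constD04 := const_of_pd2_zero d0000 pd0_D04 pd1_D04
  have constD14 := const_of_pd2_zero d1111 pd0_D14 pd1_D14
  have valD14 : ∀ p, pd2 1 (pd2 1 (pd2 1 (pd2 1 g))) p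
      = pd2 1 (pd2 1 (pd2 1 (pd2 1 g))) ![0,0] := fun p => constD14 p ![0,0]
  have valD04 : ∀ p, pd2 0 (pd2 0 (pd2 0 (pd2 0 g))) p
      = -(pd2 1 (pd2 1 (pd2 1 (pd2 1 g))) ![0,0]) := by
    intro p
    have h₁ := constD04 p ![0,0]
    have h₂ := H4 ![0,0]
    linarith
  -- step B
  have C1 : ∀ x₁ t, pd2 0 (pd2 0 g) ![x₁, t] =
      pd2 0 (pd2 0 g) ![x₁, 0] + t * pd2 0 (pd2 0 (pd2 1 g)) ![x₁, 0] := by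
    intro x₁ t
    have hd : ∀ s, HasDerivAt (fun u => pd2 0 (pd2 0 g) ![x₁, u])
        (pd2 1 (pd2 0 (pd2 0 g)) ![x₁, s]) s := fun s => hasDerivAt_line1 d00 x₁ s
    have hd2 : ∀ s, HasDerivAt (fun u => pd2 1 (pd2 0 (pd2 0 g)) ![x₁, u]) 0 s := by
      intro s
      have A := hasDerivAt_line1 d100 x₁ s
      rwa [congrFun K1fn ![x₁, s]] at A
    have := affine_of_hasDerivAt hd hd2 t
    rw [congrFun e_a ![x₁, (0:ℝ)]] at this
    exact this
  -- step C
  have key : ∀ x₁ x₂, g ![x₁, x₂] - g ![x₁, 0] - x₂ * pd2 1 g ![x₁, 0] =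
      (g ![0, x₂] - g ![0, 0] - x₂ * pd2 1 g ![0, 0]) +
      x₁ * (pd2 0 g ![0, x₂] - pd2 0 g ![0, 0] - x₂ * pd2 0 (pd2 1 g) ![0, 0]) := by
    intro x₁ x₂
    have hd : ∀ s, HasDerivAt (fun u => g ![u, x₂] - g ![u, 0] - x₂ * pd2 1 g ![u, 0])
        (pd2 0 g ![s, x₂] - pd2 0 g ![s, 0] - x₂ * pd2 0 (pd2 1 g) ![s, 0]) s := fun s =>
      ((hasDerivAt_line0 dg x₂ s).sub (hasDerivAt_line0 dg 0 s)).sub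
        ((hasDerivAt_line0 d1 0 s).const_mul x₂)
    have hd2 : ∀ s, HasDerivAt
        (fun u => pd2 0 g ![u, x₂] - pd2 0 g ![u, 0] - x₂ * pd2 0 (pd2 1 g) ![u, 0]) 0 s := by
      intro s
      have A := ((hasDerivAt_line0 d0 x₂ s).sub (hasDerivAt_line0 d0 0 s)).sub
        ((hasDerivAt_line0 d01 0 s).const_mul x₂)
      have hv : pd2 0 (pd2 0 g) ![s, x₂] - pd2 0 (pd2 0 g) ![s, 0]
          - x₂ * pd2 0 (pd2 0 (pd2 1 g)) ![s, 0] = 0 := by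
        rw [C1 s x₂]; ring
      rwa [hv] at A
    have := affine_of_hasDerivAt hd hd2 x₁
    simpa using this
  refine ⟨fun t => g ![t, 0], fun t => pd2 1 g ![t, 0],
    fun t => g ![0, t] - g ![0, 0] - t * pd2 1 g ![0, 0],
    fun t => pd2 0 g ![0, t] - pd2 0 g ![0, 0] - t * pd2 0 (pd2 1 g) ![0, 0],
    pd2 1 (pd2 1 (pd2 1 (pd2 1 g))) ![0, 0], ?_, ?_, ?_, ?_, ?_, ?_, ?_, ?_, ?_⟩
  · exact hg.comp (curve0_smooth 0)
  · exact s1.comp (curve0_smooth 0)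
  · exact ((hg.comp (curve1_smooth 0)).sub contDiff_const).sub (contDiff_id.mul contDiff_const)
  · exact ((s0.comp (curve1_smooth 0)).sub contDiff_const).sub (contDiff_id.mul contDiff_const)
  · -- f₂'''
    intro t
    have df1 : deriv (fun t => pd2 1 g ![t, 0]) = fun t => pd2 0 (pd2 1 g) ![t, 0] :=
      funext fun t => deriv_line0 d1 0 t
    have df2 : deriv (deriv (fun t => pd2 1 g ![t, 0]))
        = fun t => pd2 0 (pd2 0 (pd2 1 g)) ![t, 0] := by
      rw [df1]; exact funext fun t => deriv_line0 d01 0 t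
    rw [df2, deriv_line0 d001 0 t]
    exact H2 _
  · -- f₄'''
    intro t
    have df1 : deriv (fun t => pd2 0 g ![0, t] - pd2 0 g ![0, 0]
        - t * pd2 0 (pd2 1 g) ![0, 0])
        = fun t => pd2 1 (pd2 0 g) ![0, t] - pd2 0 (pd2 1 g) ![0, 0] :=
      deriv_sub_affine (fun t => hasDerivAt_line1 d0 0 t) _ _
    have df2 : deriv (deriv (fun t => pd2 0 g ![0, t] - pd2 0 g ![0, 0]
        - t * pd2 0 (pd2 1 g) ![0, 0]))
        = fun t => pd2 1 (pd2 1 (pd2 0 g)) ![0, t] := by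
      rw [df1]; funext t
      exact (((hasDerivAt_line1 d10 0 t)).sub_const _).deriv
    rw [df2, deriv_line1 d110 0 t]
    have : pd2 1 (pd2 1 (pd2 1 (pd2 0 g))) = fun _ => 0 := by
      rw [c10, pd2_comm s1 1 0, pd2_comm s11 1 0, Z3]
    exact congrFun this _
  · -- f₁''''
    intro t
    have df1 : deriv (fun t => g ![t, 0]) = fun t => pd2 0 g ![t, 0] :=
      funext fun t => deriv_line0 dg 0 t
    have df2 : deriv (deriv (fun t => g ![t, 0])) = fun t => pd2 0 (pd2 0 g) ![t, 0] := by
      rw [df1]; exact funext fun t => deriv_line0 d0 0 t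
    have df3 : deriv (deriv (deriv (fun t => g ![t, 0])))
        = fun t => pd2 0 (pd2 0 (pd2 0 g)) ![t, 0] := by
      rw [df2]; exact funext fun t => deriv_line0 d00 0 t
    rw [df3, deriv_line0 d000 0 t]
    exact valD04 ![t, 0]
  · -- f₃''''
    intro t
    have df1 : deriv (fun t => g ![0, t] - g ![0, 0] - t * pd2 1 g ![0, 0])
        = fun t => pd2 1 g ![0, t] - pd2 1 g ![0, 0] :=
      deriv_sub_affine (fun t => hasDerivAt_line1 dg 0 t) _ _
    have df2 : deriv (deriv (fun t => g ![0, t] - g ![0, 0] - t * pd2 1 g ![0, 0]))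
        = fun t => pd2 1 (pd2 1 g) ![0, t] := by
      rw [df1]; funext t
      exact ((hasDerivAt_line1 d1 0 t).sub_const _).deriv
    have df3 : deriv (deriv (deriv (fun t => g ![0, t] - g ![0, 0] - t * pd2 1 g ![0, 0])))
        = fun t => pd2 1 (pd2 1 (pd2 1 g)) ![0, t] := by
      rw [df2]; exact funext fun t => deriv_line1 d11 0 t
    rw [df3, deriv_line1 d111 0 t]
    exact valD14 ![0, t]
  · -- decomposition
    intro p
    have hk := key (p 0) (p 1)
    rw [vec_eta p] at hk
    beta_reduce
    linarith

/-- A smooth function `g : ℝ² → ℝ` satisfies `∂⁴g/∂x₁²∂x₂² = 0`, `∂⁴g/∂x₁³∂x₂ = 0`,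
`∂⁴g/∂x₁∂x₂³ = 0` and `∂⁴g/∂x₁⁴ + ∂⁴g/∂x₂⁴ = 0` identically if and only if
`g = f₁(x₁) + x₂f₂(x₁) + f₃(x₂) + x₁f₄(x₂)` with `f₂''' ≡ 0`, `f₄''' ≡ 0`,
`f₁'''' ≡ −c`, `f₃'''' ≡ c` for some constant `c`. -/
theorem Z4_plus_center_g_form
    (g : (Fin 2 → ℝ) → ℝ) (hg : ContDiff ℝ (⊤ : ℕ∞) g) :
    ((∀ p, pd2 0 (pd2 0 (pd2 1 (pd2 1 g))) p = 0) ∧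
     (∀ p, pd2 0 (pd2 0 (pd2 0 (pd2 1 g))) p = 0) ∧
     (∀ p, pd2 0 (pd2 1 (pd2 1 (pd2 1 g))) p = 0) ∧
     (∀ p, pd2 0 (pd2 0 (pd2 0 (pd2 0 g))) p + pd2 1 (pd2 1 (pd2 1 (pd2 1 g))) p = 0)) ↔
    ∃ (f₁ f₂ f₃ f₄ : ℝ → ℝ) (c : ℝ),
      ContDiff ℝ (⊤ : ℕ∞) f₁ ∧ ContDiff ℝ (⊤ : ℕ∞) f₂ ∧
      ContDiff ℝ (⊤ : ℕ∞) f₃ ∧ ContDiff ℝ (⊤ : ℕ∞) f₄ ∧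
      (∀ t, deriv (deriv (deriv f₂)) t = 0) ∧
      (∀ t, deriv (deriv (deriv f₄)) t = 0) ∧
      (∀ t, deriv (deriv (deriv (deriv f₁))) t = -c) ∧
      (∀ t, deriv (deriv (deriv (deriv f₃))) t = c) ∧
      ∀ p : Fin 2 → ℝ, g p = f₁ (p 0) + p 1 * f₂ (p 0) + f₃ (p 1) + p 0 * f₄ (p 1) := by
  constructor
  · rintro ⟨H1, H2, H3, H4⟩
    exact forward_dir hg H1 H2 H3 H4
  · rintro ⟨f₁, f₂, f₃, f₄, c, h₁, h₂, h₃, h₄, hf₂, hf₄, hf₁, hf₃, hform⟩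
    have hgs : g = shape f₁ f₂ f₃ f₄ := funext fun p => hform p
    rw [hgs]
    exact converse_dir h₁ h₂ h₃ h₄ hf₂ hf₄ hf₁ hf₃
end

section
/- Let u = (u₁,u₂,u₃) : ℝ³ → ℝ³ be a smooth displacement field satisfying Δuᵢ = 0 for each i ∈ {1,2,3} and ∂(div u)/∂xⱼ = 0 for each j ∈ {1,2,3} (i.e., the universal displacements of classical isotropic linear elasticity). Then Δ(Δuᵢ) = 0 for each i, Δ(∂(div u)/∂xⱼ) = 0 for each j, and Δ((curl u)ᵢ) = 0 for each i. Consequently, for all real constants c₁, c₂, c₃, c₄, c₅, the field u satisfies c₁ Δu + c₂ grad(div u) + c₃ ΔΔu + c₄ Δ(grad(div u)) + c₅ Δ(curl u) = 0; in particular u satisfies the equilibrium equations of every isotropic (classes 𝕊𝕆(3) and 𝕆(3)) linear strain-gradient elastic solid, so the classical isotropic universal displacements remain universal for linear strain-gradient elasticity. -/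
/-- Partial derivative of a scalar field on `ℝ³` in the `j`-th coordinate direction. -/
noncomputable def pd (j : Fin 3) (f : (Fin 3 → ℝ) → ℝ) : (Fin 3 → ℝ) → ℝ :=
  fun x => fderiv ℝ f x (Pi.single j 1)

/-- The `i`-th component of a vector field on `ℝ³`. -/
def comp (u : (Fin 3 → ℝ) → Fin 3 → ℝ) (i : Fin 3) : (Fin 3 → ℝ) → ℝ :=
  fun x => u x i

/-- The Laplacian of a scalar field on `ℝ³`. -/
noncomputable def lap (f : (Fin 3 → ℝ) → ℝ) : (Fin 3 → ℝ) → ℝ :=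
  fun x => pd 0 (pd 0 f) x + pd 1 (pd 1 f) x + pd 2 (pd 2 f) x

/-- The divergence of a vector field on `ℝ³`. -/
noncomputable def diverg (u : (Fin 3 → ℝ) → Fin 3 → ℝ) : (Fin 3 → ℝ) → ℝ :=
  fun x => pd 0 (comp u 0) x + pd 1 (comp u 1) x + pd 2 (comp u 2) x

/-- The curl of a vector field on `ℝ³`. -/
noncomputable def curl (u : (Fin 3 → ℝ) → Fin 3 → ℝ) : (Fin 3 → ℝ) → Fin 3 → ℝ :=
  fun x => ![pd 1 (comp u 2) x - pd 2 (comp u 1) x,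
             pd 2 (comp u 0) x - pd 0 (comp u 2) x,
             pd 0 (comp u 1) x - pd 1 (comp u 0) x]

lemma aux_two_le : (2 : WithTop ℕ∞) ≤ ((⊤:ℕ∞) : WithTop ℕ∞) := by
  rw [show (2 : WithTop ℕ∞) = ((2:ℕ∞):WithTop ℕ∞) by rfl]
  exact WithTop.coe_le_coe.2 le_top

lemma aux_one_le : (1 : WithTop ℕ∞) ≤ ((⊤:ℕ∞) : WithTop ℕ∞) := by
  rw [show (1 : WithTop ℕ∞) = ((1:ℕ∞):WithTop ℕ∞) by rfl]
  exact WithTop.coe_le_coe.2 le_top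

lemma contDiff_pd (j : Fin 3) (f : (Fin 3 → ℝ) → ℝ) (hf : ContDiff ℝ (⊤:ℕ∞) f) :
    ContDiff ℝ (⊤:ℕ∞) (pd j f) := by
  have h1 : ContDiff ℝ (⊤:ℕ∞) (fderiv ℝ f) := hf.fderiv_right (by simp)
  exact (ContinuousLinearMap.apply ℝ ℝ (Pi.single j 1 : Fin 3 → ℝ)).contDiff.comp h1

lemma pd_eq_snd (f : (Fin 3 → ℝ) → ℝ) (hf : ContDiff ℝ (⊤:ℕ∞) f) (i j : Fin 3)
    (x : Fin 3 → ℝ) :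
    pd i (pd j f) x = fderiv ℝ (fderiv ℝ f) x (Pi.single i 1) (Pi.single j 1) := by
  have hd : Differentiable ℝ (fderiv ℝ f) :=
    ((hf.fderiv_right (by simp) : ContDiff ℝ (⊤:ℕ∞) (fderiv ℝ f))).differentiable (by simp)
  have h := fderiv_clm_apply (c := fderiv ℝ f) (u := fun _ => (Pi.single j 1 : Fin 3 → ℝ))
    (x := x) (hd x) (differentiableAt_const _)
  show fderiv ℝ (fun y => fderiv ℝ f y (Pi.single j 1)) x (Pi.single i 1) = _
  rw [h]; simp

lemma pd_comm (f : (Fin 3 → ℝ) → ℝ) (hf : ContDiff ℝ (⊤:ℕ∞) f) (i j : Fin 3)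
    (x : Fin 3 → ℝ) : pd i (pd j f) x = pd j (pd i f) x := by
  rw [pd_eq_snd f hf i j x, pd_eq_snd f hf j i x]
  exact hf.contDiffAt.isSymmSndFDerivAt (by rw [minSmoothness_of_isRCLikeNormedField]; exact aux_two_le) _ _

lemma pd_zero_fun (j : Fin 3) (x : Fin 3 → ℝ) : pd j (fun _ => (0:ℝ)) x = 0 := by
  simp [pd]

lemma lap_zero_fun (x : Fin 3 → ℝ) : lap (fun _ => (0:ℝ)) x = 0 := by
  simp only [lap]
  rw [show pd 0 (fun _ => (0:ℝ)) = fun _ => (0:ℝ) from funext (pd_zero_fun 0),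
    show pd 1 (fun _ => (0:ℝ)) = fun _ => (0:ℝ) from funext (pd_zero_fun 1),
    show pd 2 (fun _ => (0:ℝ)) = fun _ => (0:ℝ) from funext (pd_zero_fun 2),
    pd_zero_fun 0 x, pd_zero_fun 1 x, pd_zero_fun 2 x]
  ring

lemma pd_add_fun (j : Fin 3) (f g : (Fin 3 → ℝ) → ℝ) (hf : ContDiff ℝ (⊤:ℕ∞) f)
    (hg : ContDiff ℝ (⊤:ℕ∞) g) :
    pd j (fun x => f x + g x) = fun x => pd j f x + pd j g x := by
  funext x
  simp [pd, fderiv_fun_add ((hf.differentiable (by simp)) x) ((hg.differentiable (by simp)) x)]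

lemma pd_sub_fun (j : Fin 3) (f g : (Fin 3 → ℝ) → ℝ) (hf : ContDiff ℝ (⊤:ℕ∞) f)
    (hg : ContDiff ℝ (⊤:ℕ∞) g) :
    pd j (fun x => f x - g x) = fun x => pd j f x - pd j g x := by
  funext x
  simp [pd, fderiv_fun_sub ((hf.differentiable (by simp)) x) ((hg.differentiable (by simp)) x)]

lemma lap_sub (f g : (Fin 3 → ℝ) → ℝ) (hf : ContDiff ℝ (⊤:ℕ∞) f)
    (hg : ContDiff ℝ (⊤:ℕ∞) g) (x : Fin 3 → ℝ) :
    lap (fun y => f y - g y) x = lap f x - lap g x := by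
  simp only [lap]
  rw [pd_sub_fun 0 f g hf hg, pd_sub_fun 1 f g hf hg, pd_sub_fun 2 f g hf hg,
    pd_sub_fun 0 _ _ (contDiff_pd 0 f hf) (contDiff_pd 0 g hg),
    pd_sub_fun 1 _ _ (contDiff_pd 1 f hf) (contDiff_pd 1 g hg),
    pd_sub_fun 2 _ _ (contDiff_pd 2 f hf) (contDiff_pd 2 g hg)]
  ring

lemma lap_pd (f : (Fin 3 → ℝ) → ℝ) (hf : ContDiff ℝ (⊤:ℕ∞) f) (j : Fin 3)
    (x : Fin 3 → ℝ) : lap (pd j f) x = pd j (lap f) x := by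
  have e : ∀ k : Fin 3, pd k (pd k (pd j f)) x = pd j (pd k (pd k f)) x := by
    intro k
    have h1 : pd k (pd j f) = pd j (pd k f) := funext (pd_comm f hf k j)
    rw [h1]
    exact pd_comm (pd k f) (contDiff_pd k f hf) k j x
  have hl : pd j (lap f) x
      = pd j (pd 0 (pd 0 f)) x + pd j (pd 1 (pd 1 f)) x + pd j (pd 2 (pd 2 f)) x := by
    have h2 : ∀ k : Fin 3, ContDiff ℝ (⊤:ℕ∞) (pd k (pd k f)) :=
      fun k => contDiff_pd k _ (contDiff_pd k f hf)
    show pd j (fun y => pd 0 (pd 0 f) y + pd 1 (pd 1 f) y + pd 2 (pd 2 f) y) x = _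
    rw [pd_add_fun j _ _ ((h2 0).add (h2 1)) (h2 2),
      pd_add_fun j _ _ (h2 0) (h2 1)]
  rw [hl]
  simp only [lap, e]

/-- If a smooth displacement field satisfies `Δu = 0` and `grad (div u) = 0` (the
universal displacements of classical isotropic linear elasticity), then `ΔΔu = 0`,
`Δ(grad (div u)) = 0` and `Δ(curl u) = 0`; consequently it satisfies the equilibrium
equations `c₁Δu + c₂ grad(div u) + c₃ΔΔu + c₄Δ(grad(div u)) + c₅Δ(curl u) = 0` of every
isotropic linear strain-gradient elastic solid. -/
theorem isotropic_universal_remains_universal_strain_gradient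
    (u : (Fin 3 → ℝ) → Fin 3 → ℝ) (hu : ContDiff ℝ (⊤ : ℕ∞) u)
    (hlap : ∀ i : Fin 3, ∀ x, lap (comp u i) x = 0)
    (hdiv : ∀ j : Fin 3, ∀ x, pd j (diverg u) x = 0) :
    (∀ i : Fin 3, ∀ x, lap (lap (comp u i)) x = 0) ∧
    (∀ j : Fin 3, ∀ x, lap (pd j (diverg u)) x = 0) ∧
    (∀ i : Fin 3, ∀ x, lap (comp (curl u) i) x = 0) ∧
    (∀ c₁ c₂ c₃ c₄ c₅ : ℝ, ∀ i : Fin 3, ∀ x,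
      c₁ * lap (comp u i) x + c₂ * pd i (diverg u) x
        + c₃ * lap (lap (comp u i)) x + c₄ * lap (pd i (diverg u)) x
        + c₅ * lap (comp (curl u) i) x = 0) := by
  have hcomp : ∀ i : Fin 3, ContDiff ℝ (⊤:ℕ∞) (comp u i) := fun i =>
    (ContinuousLinearMap.proj (R := ℝ) (φ := fun _ : Fin 3 => ℝ) i).contDiff.comp hu
  have h1 : ∀ i : Fin 3, ∀ x, lap (lap (comp u i)) x = 0 := by
    intro i x
    rw [show lap (comp u i) = fun _ => (0:ℝ) from funext (hlap i)]
    exact lap_zero_fun x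
  have h2 : ∀ j : Fin 3, ∀ x, lap (pd j (diverg u)) x = 0 := by
    intro j x
    rw [show pd j (diverg u) = fun _ => (0:ℝ) from funext (hdiv j)]
    exact lap_zero_fun x
  have key : ∀ a b c d : Fin 3, ∀ x,
      lap (fun y => pd a (comp u b) y - pd c (comp u d) y) x = 0 := by
    intro a b c d x
    rw [lap_sub _ _ (contDiff_pd a _ (hcomp b)) (contDiff_pd c _ (hcomp d)) x,
      lap_pd _ (hcomp b) a x, lap_pd _ (hcomp d) c x,
      show lap (comp u b) = fun _ => (0:ℝ) from funext (hlap b),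
      show lap (comp u d) = fun _ => (0:ℝ) from funext (hlap d),
      pd_zero_fun a x, pd_zero_fun c x, sub_zero]
  have h3 : ∀ i : Fin 3, ∀ x, lap (comp (curl u) i) x = 0 := by
    intro i x
    fin_cases i
    · exact key 1 2 2 1 x
    · exact key 2 0 0 2 x
    · exact key 0 1 1 0 x
  refine ⟨h1, h2, h3, ?_⟩
  intro c₁ c₂ c₃ c₄ c₅ i x
  rw [hlap i x, hdiv i x, h1 i x, h2 i x, h3 i x]
  ring
end
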